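/- Let P = [p] × [q], K a ring, ℓ ≥ 1, and f a K-labeling with R^ℓ f ≠ ⊥. Set a = f(0), b = f(1). Then (R^ℓ f)(1,1) = a · ((R^{ℓ−1} f)(p,q))⁻¹ · b. -/

import Mathlib

/-!
Write `g = R f`. Each toggle replaces `f v` by `g v` only after all upper covers of `v` carry
their new labels, so for every `v ∈ P` with `g v` invertible the toggle formula reads
`(g v)⁻¹ * ∑_{u ⋖ v} f u = (∑_{u ⋗ v} (g u)⁻¹) * f v`.
Thus the weights `(g w)⁻¹ * f v` on the covering relations `v ⋖ w` of `P̂` form a flow that is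
conserved at every non-minimal element of `P`, and summing over `P` shows that the flow leaving
the minimal elements equals the flow entering `1`. For `P` with least element `m` and greatest
element `M` this is `(∑_{u ⋗ m} (g u)⁻¹) * f m = (f 1)⁻¹ * f M`, and substituting it into the
toggle formula for `g m` gives `g m = f 0 * (f M)⁻¹ * f 1`.
-/

open scoped Classical


instance {α : Type*} [Fintype α] : Fintype (WithTop α) :=
  inferInstanceAs (Fintype (Option α))

instance {α : Type*} [Fintype α] : Fintype (WithBot α) :=
  inferInstanceAs (Fintype (Option α))

/-- The poset `P` with an adjoined global minimum `⊥` (called `0` in the paper) and an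
adjoined global maximum `⊤` (called `1` in the paper). -/
abbrev PHat (P : Type*) := WithBot (WithTop P)

/-- The embedding of `P` into `PHat P`. -/
def toPHat {P : Type*} (v : P) : PHat P := ((v : WithTop P) : WithBot (WithTop P))

/-- The birational toggle `T_v` at an element `v ∈ P`, as a partial map (modelled via
`Option`) on `K`-labelings `f : PHat P → K`.  It replaces the label at `v` by
`(∑_{u ⋖ v} f u) * (f v)⁻¹ * (∑_{u ⋗ v} (f u)⁻¹)⁻¹` and leaves all other labels unchanged;
it is undefined (`none`) whenever any of the required inverses fails to exist. -/
noncomputable def toggle {P : Type*} [PartialOrder P] [Fintype P] {K : Type*} [Ring K]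
    (v : P) (f : PHat P → K) : Option (PHat P → K) :=
  if IsUnit (f (toPHat v)) ∧ (∀ u : PHat P, toPHat v ⋖ u → IsUnit (f u)) ∧
      IsUnit (∑ u ∈ Finset.univ.filter (fun u : PHat P => toPHat v ⋖ u), Ring.inverse (f u))
  then some (Function.update f (toPHat v)
      ((∑ u ∈ Finset.univ.filter (fun u : PHat P => u ⋖ toPHat v), f u) *
        Ring.inverse (f (toPHat v)) *
        Ring.inverse
          (∑ u ∈ Finset.univ.filter (fun u : PHat P => toPHat v ⋖ u), Ring.inverse (f u))))
  else none

/-- `toggleList [v₁, …, vₘ] = T_{v₁} ∘ T_{v₂} ∘ ⋯ ∘ T_{vₘ}` as a partial map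
(`T_{vₘ}` is applied first); `⊥ = none` propagates through the composition. -/
noncomputable def toggleList {P : Type*} [PartialOrder P] [Fintype P] {K : Type*} [Ring K] :
    List P → (PHat P → K) → Option (PHat P → K)
  | [], f => some f
  | v :: L, f => (toggleList L f).bind (toggle v)

/-- `rowIter L n` is the `n`-fold iteration `R^n` of birational rowmotion
`R = toggleList L` (for `L` a linear extension of `P`), as a partial map. -/
noncomputable def rowIter {P : Type*} [PartialOrder P] [Fintype P] {K : Type*} [Ring K]
    (L : List P) : ℕ → (PHat P → K) → Option (PHat P → K)
  | 0, f => some f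
  | n + 1, f => (toggleList L f).bind (rowIter L n)

/-- A linear extension of a poset `P`: a list of all elements of `P`, each occurring exactly
once, such that `vᵢ < vⱼ` in `P` implies `i < j`. -/
def IsLinearExtension {P : Type*} [PartialOrder P] (L : List P) : Prop :=
  L.Nodup ∧ (∀ v : P, v ∈ L) ∧ L.Pairwise fun a b => ¬ b < a

open scoped Ring
open Finset

section PHat

variable {P : Type*}

lemma toPHat_injective : Function.Injective (toPHat (P := P)) := fun _ _ h => by
  simpa [toPHat] using h

lemma bot_ne_toPHat (v : P) : (⊥ : PHat P) ≠ toPHat v := by simp [toPHat]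

lemma top_ne_toPHat (v : P) : (⊤ : PHat P) ≠ toPHat v := by
  simp [toPHat, ← WithBot.coe_top]

variable [PartialOrder P]

lemma toPHat_lt_toPHat {a b : P} : toPHat a < toPHat b ↔ a < b := by simp [toPHat]

lemma toPHat_covBy_toPHat {a b : P} : toPHat a ⋖ toPHat b ↔ a ⋖ b :=
  WithBot.coe_covBy_coe.trans WithTop.coe_covBy_coe

lemma bot_covBy_toPHat {a : P} : ⊥ ⋖ toPHat a ↔ IsMin a := by
  rw [toPHat, WithBot.bot_covBy_coe]
  simp [isMin_iff_forall_not_lt]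

lemma toPHat_covBy_top {a : P} : toPHat a ⋖ ⊤ ↔ IsMax a :=
  WithBot.coe_covBy_coe.trans WithTop.coe_covBy_top

omit [PartialOrder P] in
theorem sum_PHat [Fintype P] {M : Type*} [AddCommMonoid M] (h : PHat P → M) :
    ∑ u, h u = h ⊥ + h ⊤ + ∑ v, h (toPHat v) := by
  rw [add_assoc]
  exact (Fintype.sum_option h).trans (congrArg _ (Fintype.sum_option _))

end PHat

section Toggle

variable {P : Type*} [PartialOrder P] [Fintype P] {K : Type*} [Ring K]

noncomputable def lowerCoverSum (f : PHat P → K) (v : P) : K :=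
  ∑ u ∈ univ.filter (· ⋖ toPHat v), f u

noncomputable def upperCoverInvSum (f : PHat P → K) (v : P) : K :=
  ∑ u ∈ univ.filter (toPHat v ⋖ ·), (f u)⁻¹ʳ

lemma lowerCoverSum_eq (f : PHat P → K) (v : P) :
    lowerCoverSum f v =
      (if IsMin v then f ⊥ else 0) + ∑ w ∈ univ.filter (· ⋖ v), f (toPHat w) := by
  simp only [lowerCoverSum, sum_filter, sum_PHat, bot_covBy_toPHat, not_top_covBy, ite_false,
    add_zero, toPHat_covBy_toPHat]

lemma upperCoverInvSum_eq (f : PHat P → K) (v : P) :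
    upperCoverInvSum f v =
      (if IsMax v then (f ⊤)⁻¹ʳ else 0) + ∑ w ∈ univ.filter (v ⋖ ·), (f (toPHat w))⁻¹ʳ := by
  simp only [upperCoverInvSum, sum_filter, sum_PHat, not_covBy_bot, toPHat_covBy_top, ite_false,
    zero_add, toPHat_covBy_toPHat]

lemma lowerCoverSum_congr {f f' : PHat P → K} {v : P} (h : ∀ u, u ⋖ toPHat v → f u = f' u) :
    lowerCoverSum f v = lowerCoverSum f' v :=
  sum_congr rfl fun u hu => h u (mem_filter.1 hu).2

lemma upperCoverInvSum_congr {f f' : PHat P → K} {v : P} (h : ∀ u, toPHat v ⋖ u → f u = f' u) :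
    upperCoverInvSum f v = upperCoverInvSum f' v :=
  sum_congr rfl fun u hu => by rw [h u (mem_filter.1 hu).2]

lemma toggle_eq_some {v : P} {f g : PHat P → K} (h : toggle v f = some g) :
    IsUnit (f (toPHat v)) ∧ (∀ u, toPHat v ⋖ u → IsUnit (f u)) ∧ IsUnit (upperCoverInvSum f v) ∧
      g = Function.update f (toPHat v)
        (lowerCoverSum f v * (f (toPHat v))⁻¹ʳ * (upperCoverInvSum f v)⁻¹ʳ) := by
  unfold toggle at h
  split_ifs at h with hdef
  exact ⟨hdef.1, hdef.2.1, hdef.2.2, (Option.some_inj.1 h).symm⟩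

lemma toggleList_apply_of_forall_ne {L : List P} {f g : PHat P → K} (h : toggleList L f = some g)
    {w : PHat P} (hw : ∀ v ∈ L, w ≠ toPHat v) : g w = f w := by
  induction L generalizing g with
  | nil => rw [← Option.some_inj.1 h]
  | cons v L ih =>
    obtain ⟨g₁, hg₁, hg⟩ := Option.bind_eq_some_iff.1 h
    rw [(toggle_eq_some hg).2.2.2, Function.update_of_ne (hw v List.mem_cons_self),
      ih hg₁ fun u hu => hw u (List.mem_cons_of_mem v hu)]

theorem toggleList_spec {L : List P} (hnd : L.Nodup) (hpw : L.Pairwise fun a b => ¬ b < a)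
    {f g : PHat P → K} (h : toggleList L f = some g) {v : P} (hv : v ∈ L) :
    IsUnit (f (toPHat v)) ∧ (∀ u, toPHat v ⋖ u → IsUnit (g u)) ∧ IsUnit (upperCoverInvSum g v) ∧
      g (toPHat v) = lowerCoverSum f v * (f (toPHat v))⁻¹ʳ * (upperCoverInvSum g v)⁻¹ʳ := by
  induction L generalizing g with
  | nil => exact absurd hv List.not_mem_nil
  | cons a L ih =>
    obtain ⟨g₁, hg₁, hg⟩ := Option.bind_eq_some_iff.1 h
    obtain ⟨haL, hndL⟩ := List.nodup_cons.1 hnd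
    obtain ⟨hlt, hpwL⟩ := List.pairwise_cons.1 hpw
    obtain ⟨hunit, hcov, hsum, hg_eq⟩ := toggle_eq_some hg
    have hg_ne : ∀ u, u ≠ toPHat a → g u = g₁ u := fun u hu => by
      rw [hg_eq, Function.update_of_ne hu]
    have not_lt_a : ∀ w ∈ L, ¬ toPHat w < toPHat a := fun w hw h =>
      hlt w hw (toPHat_lt_toPHat.1 h)
    rcases List.mem_cons.1 hv with rfl | hvL
    · have hg₁v : g₁ (toPHat v) = f (toPHat v) :=
        toggleList_apply_of_forall_ne hg₁ fun w hw h => haL (by rwa [toPHat_injective h])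
      have hup : upperCoverInvSum g v = upperCoverInvSum g₁ v :=
        upperCoverInvSum_congr fun u hu => hg_ne u hu.lt.ne'
      have hlow : lowerCoverSum g₁ v = lowerCoverSum f v := lowerCoverSum_congr fun u hu =>
        toggleList_apply_of_forall_ne hg₁ fun w hw hu' => not_lt_a w hw (hu' ▸ hu.lt)
      refine ⟨hg₁v ▸ hunit, fun u hu => hg_ne u hu.lt.ne' ▸ hcov u hu, hup ▸ hsum, ?_⟩
      rw [hup, hg_eq, Function.update_self, hlow, hg₁v]
    · obtain ⟨hunit', hcov', hsum', heq'⟩ := ih hndL hpwL hg₁ hvL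
      have hcov_ne : ∀ u, toPHat v ⋖ u → u ≠ toPHat a := fun u hu h =>
        not_lt_a v hvL (h ▸ hu.lt)
      have hup : upperCoverInvSum g v = upperCoverInvSum g₁ v :=
        upperCoverInvSum_congr fun u hu => hg_ne u (hcov_ne u hu)
      refine ⟨hunit', fun u hu => hg_ne u (hcov_ne u hu) ▸ hcov' u hu, hup ▸ hsum', ?_⟩
      rw [hg_ne _ fun h => haL (by rwa [← toPHat_injective h]), hup, heq']

end Toggle

section Flow

variable {P : Type*} [PartialOrder P] [Fintype P] {K : Type*} [Ring K]

theorem sum_isMin_upperCoverInvSum_mul (f g : PHat P → K)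
    (hflow : ∀ v : P, ¬ IsMin v →
      (g (toPHat v))⁻¹ʳ * lowerCoverSum f v = upperCoverInvSum g v * f (toPHat v)) :
    ∑ v ∈ univ.filter IsMin, upperCoverInvSum g v * f (toPHat v) =
      (g ⊤)⁻¹ʳ * ∑ v ∈ univ.filter IsMax, f (toPHat v) := by
  set flow : P → P → K := fun v w => (g (toPHat w))⁻¹ʳ * f (toPHat v)
  set totalFlow := ∑ v, ∑ w ∈ univ.filter (v ⋖ ·), flow v w
  have h_out : ∑ v, upperCoverInvSum g v * f (toPHat v) =
      (g ⊤)⁻¹ʳ * ∑ v ∈ univ.filter IsMax, f (toPHat v) + totalFlow := by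
    simp only [totalFlow, flow, upperCoverInvSum_eq, add_mul, ite_mul, zero_mul, sum_add_distrib,
      sum_mul, ← sum_filter, mul_sum]
  have h_in : ∑ v, upperCoverInvSum g v * f (toPHat v) =
      ∑ v ∈ univ.filter IsMin, upperCoverInvSum g v * f (toPHat v) + totalFlow := by
    have h_flow : totalFlow = ∑ w ∈ univ.filter (¬ IsMin ·), ∑ v ∈ univ.filter (· ⋖ w), flow v w :=
      calc totalFlow = ∑ w, ∑ v ∈ univ.filter (· ⋖ w), flow v w := sum_comm' fun v w => by simp
        _ = _ := (sum_filter_of_ne (p := (¬ IsMin ·)) fun w _ hne hmin =>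
          hne (sum_eq_zero fun v hv => (hmin.not_lt (mem_filter.1 hv).2.lt).elim)).symm
    rw [← sum_filter_add_sum_filter_not univ IsMin, h_flow]
    refine congrArg _ (sum_congr rfl fun w hw => ?_)
    rw [← hflow w (mem_filter.1 hw).2, lowerCoverSum_eq, if_neg (mem_filter.1 hw).2, zero_add,
      mul_sum]
  exact add_right_cancel (h_in.symm.trans h_out)

theorem toggleList_apply_of_isBot_of_isTop {L : List P} (hL : IsLinearExtension L)
    {f g : PHat P → K} (h : toggleList L f = some g) {m M : P} (hm : IsBot m) (hM : IsTop M) :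
    IsUnit (f (toPHat M)) ∧ g (toPHat m) = f ⊥ * (f (toPHat M))⁻¹ʳ * f ⊤ := by
  obtain ⟨hnd, hall, hpw⟩ := hL
  have spec := fun v => toggleList_spec hnd hpw h (hall v)
  have hg_top : g ⊤ = f ⊤ := toggleList_apply_of_forall_ne h fun v _ => top_ne_toPHat v
  have hf_top : IsUnit (f ⊤) := hg_top ▸ (spec M).2.1 ⊤ (toPHat_covBy_top.2 hM.isMax)
  have hflow : ∀ v : P, ¬ IsMin v →
      (g (toPHat v))⁻¹ʳ * lowerCoverSum f v = upperCoverInvSum g v * f (toPHat v) := by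
    intro v hv
    obtain ⟨w, hwv⟩ := exists_covBy_of_wellFoundedGT hv
    obtain ⟨hfv, -, hA, hgv⟩ := spec v
    have hgv_unit : IsUnit (g (toPHat v)) := (spec w).2.1 _ (toPHat_covBy_toPHat.2 hwv)
    rw [Ring.inverse_mul_eq_iff_eq_mul _ _ _ hgv_unit, hgv, mul_assoc _ (_)⁻¹ʳ,
      Ring.inverse_mul_cancel_left _ _ hA, Ring.inverse_mul_cancel_right _ _ hfv]
  have hkey := sum_isMin_upperCoverInvSum_mul f g hflow
  have hmin : univ.filter IsMin = {m} := by ext v; simp [hm.isMin_iff]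
  have hmax : univ.filter IsMax = {M} := by ext v; simp [hM.isMax_iff]
  rw [hmin, hmax, sum_singleton, sum_singleton, hg_top] at hkey
  have hlow : lowerCoverSum f m = f ⊥ := by
    rw [lowerCoverSum_eq, if_pos hm.isMin, add_eq_left]
    exact sum_eq_zero fun w hw => (hm.isMin.not_lt (mem_filter.1 hw).2.lt).elim
  obtain ⟨-, -, hA, hgm⟩ := spec m
  refine ⟨(spec M).1, ?_⟩
  rw [hgm, hlow, mul_assoc, ← Ring.inverse_mul (Or.inl hA), hkey,
    Ring.inverse_mul (Or.inl hf_top.ringInverse), Ring.inverse_inverse hf_top, mul_assoc]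

end Flow

section Rowmotion

variable {P : Type*} [PartialOrder P] [Fintype P] {K : Type*} [Ring K]

lemma rowIter_succ_eq_bind (L : List P) (n : ℕ) (f : PHat P → K) :
    rowIter L (n + 1) f = (rowIter L n f).bind (toggleList L) := by
  induction n generalizing f with
  | zero => simp [rowIter]
  | succ n ih =>
    change (toggleList L f).bind (rowIter L (n + 1)) = ((toggleList L f).bind (rowIter L n)).bind _
    simp only [ih, Option.bind_assoc]

lemma rowIter_apply_of_forall_ne {L : List P} {n : ℕ} {f g : PHat P → K}
    (h : rowIter L n f = some g) {w : PHat P} (hw : ∀ v : P, w ≠ toPHat v) : g w = f w := by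
  induction n generalizing f with
  | zero => rw [← Option.some_inj.1 h]
  | succ n ih =>
    obtain ⟨f₁, hf₁, hg⟩ := Option.bind_eq_some_iff.1 h
    rw [ih hg, toggleList_apply_of_forall_ne hf₁ fun v _ => hw v]

end Rowmotion

/-- Let `P = [p] × [q]`, `ℓ ≥ 1`, and `f` a `K`-labeling with
`R^ℓ f ≠ ⊥`.  Then `(R^ℓ f)(1,1) = a · ((R^{ℓ-1} f)(p,q))⁻¹ · b` where `a = f(0)`,
`b = f(1)` (and the inverse on the right-hand side exists). -/
theorem stmt17 {p q : ℕ} (hp : 0 < p) (hq : 0 < q) {K : Type*} [Ring K]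
    (L : List (Fin p × Fin q)) (hL : IsLinearExtension L) (ℓ : ℕ) (hℓ : 1 ≤ ℓ)
    (f g : PHat (Fin p × Fin q) → K) (hfg : rowIter L ℓ f = some g) :
    ∃ g' : PHat (Fin p × Fin q) → K,
      rowIter L (ℓ - 1) f = some g' ∧
      IsUnit (g' (toPHat (⟨p - 1, by omega⟩, ⟨q - 1, by omega⟩))) ∧
      g (toPHat (⟨0, hp⟩, ⟨0, hq⟩)) =
        f ⊥ * Ring.inverse (g' (toPHat (⟨p - 1, by omega⟩, ⟨q - 1, by omega⟩))) * f ⊤ := by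
  obtain ⟨n, rfl⟩ : ∃ n, ℓ = n + 1 := ⟨ℓ - 1, by omega⟩
  obtain ⟨g', hg', hg⟩ := Option.bind_eq_some_iff.1 (rowIter_succ_eq_bind L n f ▸ hfg)
  have hbot : IsBot ((⟨0, hp⟩, ⟨0, hq⟩) : Fin p × Fin q) := fun _ => ⟨Nat.zero_le _, Nat.zero_le _⟩
  have htop : IsTop ((⟨p - 1, by omega⟩, ⟨q - 1, by omega⟩) : Fin p × Fin q) := fun v =>
    ⟨Nat.le_sub_one_of_lt v.1.isLt, Nat.le_sub_one_of_lt v.2.isLt⟩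
  obtain ⟨hunit, heq⟩ := toggleList_apply_of_isBot_of_isTop hL hg hbot htop
  refine ⟨g', hg', hunit, ?_⟩
  rw [heq, rowIter_apply_of_forall_ne hg' (bot_ne_toPHat ·),
    rowIter_apply_of_forall_ne hg' (top_ne_toPHat ·)]
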